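/- Suppose in a proper instance a feasible schedule delivers to d₂=(x₂,y₂) starting at (s₂,0) and returning at (r₂,0), then immediately to d₁=(x₁,y₁) starting at s₁ = r₂ and returning at (r₁,0), with x₁ < x₂. Then es(d₁) < es(d₂) ≤ s₂ < r₂ ≤ ls(d₁) < ls(d₂), so in particular a delivery to d₁ may feasibly start at time s₂ and a delivery to d₂ may feasibly start at time r₂ or later. -/
import Mathlib


noncomputable section

/-- Euclidean distance between two points of the plane (as pairs of reals). -/
def dist2 (p q : ℝ × ℝ) : ℝ :=
  Real.sqrt ((p.1 - q.1) ^ 2 + (p.2 - q.2) ^ 2)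

/-- Earliest feasible start position for a delivery to `d = (x,y)`. -/
def es (v R : ℝ) (d : ℝ × ℝ) : ℝ :=
  d.1 - R / (2 * v) -
    (R / 2) * Real.sqrt (1 - d.2 ^ 2 / (R / (2 * v) * Real.sqrt (v ^ 2 - 1)) ^ 2)

/-- Latest feasible start position for a delivery to `d = (x,y)`. -/
def ls (v R : ℝ) (d : ℝ × ℝ) : ℝ :=
  d.1 - R / (2 * v) +
    (R / 2) * Real.sqrt (1 - d.2 ^ 2 / (R / (2 * v) * Real.sqrt (v ^ 2 - 1)) ^ 2)

/-- Latest return position from a delivery to `d`. -/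
def lr (v R : ℝ) (d : ℝ × ℝ) : ℝ := ls v R d + R / v

/-- A finite set of delivery points is a proper instance. -/
def Proper (v R : ℝ) (D : Finset (ℝ × ℝ)) : Prop :=
  (∀ di ∈ D, ∀ dj ∈ D, di ≠ dj →
    dj ∉ convexHull ℝ ({((es v R di, 0) : ℝ × ℝ), di, ((lr v R di, 0) : ℝ × ℝ)} : Set (ℝ × ℝ))) ∧
  (∀ di ∈ D, ∀ dj ∈ D, di ≠ dj →
    ¬ Set.Icc (es v R di) (ls v R di) ⊆ Set.Icc (es v R dj) (ls v R dj))

/-- A single delivery trip with range constraint. -/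
def Trip (v R s : ℝ) (p : ℝ × ℝ) (r : ℝ) : Prop :=
  s < r ∧ dist2 p (s, 0) + dist2 ((r : ℝ), 0) p = v * (r - s) ∧ v * (r - s) ≤ R

lemma feasible_start (v R : ℝ) (hv : 1 < v) (hR : 0 < R) (d : ℝ × ℝ)
    (hb : |d.2| ≤ R / (2 * v) * Real.sqrt (v ^ 2 - 1)) (s r : ℝ)
    (h : Trip v R s d r) : es v R d ≤ s ∧ s ≤ ls v R d := by
  obtain ⟨hsr, heq, hle⟩ := h
  have hv0 : (0:ℝ) < v := lt_trans one_pos hv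
  have hv1 : (0:ℝ) < v ^ 2 - 1 := by nlinarith
  set x := d.1 with hxdef
  set y := d.2 with hydef
  set a := dist2 d (s, 0) with hadef
  set b := dist2 ((r:ℝ), 0) d with hbdef
  set u := x - s with hudef
  set w := r - x with hwdef
  clear_value a b
  have ha2 : a ^ 2 = u ^ 2 + y ^ 2 := by
    rw [hadef, dist2, Real.sq_sqrt (by positivity)]; rw [hudef]; ring
  have hb2 : b ^ 2 = w ^ 2 + y ^ 2 := by
    rw [hbdef, dist2, Real.sq_sqrt (by positivity)]; rw [hwdef]; ring
  have huw : u + w = r - s := by rw [hudef, hwdef]; ring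
  have hpos : 0 < u + w := by rw [huw]; linarith
  clear_value x y u w
  have h1 : (a - b) * (a + b) = (u - w) * (u + w) := by linear_combination ha2 - hb2
  have hab : a + b = v * (u + w) := by rw [huw]; exact heq
  have hle' : v * (u + w) ≤ R := by rw [huw]; exact hle
  have hd : (a - b) * v = u - w := by
    apply mul_right_cancel₀ (ne_of_gt hpos)
    calc (a - b) * v * (u + w) = (a - b) * (v * (u + w)) := by ring
      _ = (a - b) * (a + b) := by rw [hab]
      _ = (u - w) * (u + w) := h1
  have h2a : 2 * a * v = v ^ 2 * (u + w) + (u - w) := by linear_combination v * hab + hd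
  have hsq : (v ^ 2 * (u + w) + (u - w)) ^ 2 = 4 * v ^ 2 * (u ^ 2 + y ^ 2) := by
    linear_combination (-(2 * a * v + (v ^ 2 * (u + w) + (u - w)))) * h2a + 4 * v ^ 2 * ha2
  set C := v ^ 2 * y ^ 2 / (v ^ 2 - 1) with hCdef
  clear_value C
  have hC : 0 ≤ C := by
    rw [hCdef]; exact div_nonneg (by positivity) hv1.le
  have hne : (v ^ 2 - 1) ≠ 0 := ne_of_gt hv1
  have hkey' : (u - w) ^ 2 * (v ^ 2 - 1) = v ^ 2 * (u + w) ^ 2 * (v ^ 2 - 1) - 4 * v ^ 2 * y ^ 2 := by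
    linear_combination (-1 : ℝ) * hsq
  have hkey : (u - w) ^ 2 = v ^ 2 * (u + w) ^ 2 - 4 * C := by
    rw [hCdef]
    field_simp
    linear_combination hkey'
  have hL : 0 < v * (u + w) := mul_pos hv0 hpos
  have hXge : 0 ≤ v * (u + w) + (u - w) := by
    have h3 : (u - w) ^ 2 ≤ (v * (u + w)) ^ 2 := by nlinarith [hkey, hC]
    have h4 := Real.sqrt_le_sqrt h3
    rw [Real.sqrt_sq_eq_abs, Real.sqrt_sq hL.le] at h4
    linarith [neg_abs_le (u - w)]
  set δ := (R - v * (u + w)) / (2 * v) with hδdef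
  clear_value δ
  have hδ : 0 ≤ δ := by rw [hδdef]; exact div_nonneg (by linarith) (by positivity)
  have e1 : 0 ≤ δ * (v * (u + w) + (u - w)) := mul_nonneg hδ hXge
  have e2 : δ + v * (u + w) / 2 ≤ R / 2 := by
    have h5 : (R - v * (u + w)) / (2 * v) ≤ (R - v * (u + w)) / 2 := by
      apply div_le_div_of_nonneg_left (by linarith) (by norm_num) (by linarith)
    rw [hδdef]; linarith
  have e3 : (δ + v * (u + w) / 2) ^ 2 ≤ (R / 2) ^ 2 :=
    pow_le_pow_left₀ (add_nonneg hδ (div_nonneg hL.le (by norm_num))) e2 2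
  have hku : R / (2 * v) - u = δ - (u - w) / 2 := by
    rw [hδdef]; field_simp; ring
  have hmain : (R / (2 * v) - u) ^ 2 + C ≤ R ^ 2 / 4 := by
    rw [hku]
    have f1 : (δ - (u - w) / 2) ^ 2 + C
        = δ ^ 2 - δ * (u - w) + (v * (u + w)) ^ 2 / 4 := by
      linear_combination hkey / 4
    have f2 : -(δ * (u - w)) ≤ δ * (v * (u + w)) := by linarith [e1]
    have f3 : (δ + v * (u + w) / 2) ^ 2
        = δ ^ 2 + δ * (v * (u + w)) + (v * (u + w)) ^ 2 / 4 := by ring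
    have f4 : (R / 2) ^ 2 = R ^ 2 / 4 := by ring
    linarith [e3, f1, f2, f3, f4]
  -- now relate to W
  set W := (R / 2) * Real.sqrt (1 - y ^ 2 / (R / (2 * v) * Real.sqrt (v ^ 2 - 1)) ^ 2)
    with hWdef
  have hs1 : Real.sqrt (v ^ 2 - 1) ^ 2 = v ^ 2 - 1 := Real.sq_sqrt hv1.le
  have hy2 : y ^ 2 ≤ (R / (2 * v)) ^ 2 * (v ^ 2 - 1) := by
    have h6 := pow_le_pow_left₀ (abs_nonneg y) hb 2
    rw [sq_abs, mul_pow, hs1] at h6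
    exact h6
  have hk2 : 0 < (R / (2 * v)) ^ 2 * (v ^ 2 - 1) := mul_pos (by positivity) hv1
  have harg0 : 0 ≤ 1 - y ^ 2 / (R / (2 * v) * Real.sqrt (v ^ 2 - 1)) ^ 2 := by
    rw [mul_pow, hs1, sub_nonneg, div_le_one hk2]
    exact hy2
  have hW0 : 0 ≤ W := by rw [hWdef]; positivity
  have hW2 : W ^ 2 = R ^ 2 / 4 - C := by
    rw [hWdef, mul_pow, Real.sq_sqrt harg0, mul_pow, hs1, hCdef]
    field_simp
    ring
  clear_value W
  have habs : |R / (2 * v) - u| ≤ W := by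
    have h7 : (R / (2 * v) - u) ^ 2 ≤ W ^ 2 := by linarith [hW2, hmain]
    have h8 := Real.sqrt_le_sqrt h7
    rwa [Real.sqrt_sq_eq_abs, Real.sqrt_sq hW0] at h8
  obtain ⟨hl, hr⟩ := abs_le.mp habs
  rw [hudef] at hl hr
  constructor
  · simp only [es]
    rw [← hxdef, ← hydef, ← hWdef]
    linarith
  · simp only [ls]
    rw [← hxdef, ← hydef, ← hWdef]
    linarith

/-- In a proper instance, if a feasible schedule delivers to `d₂` starting at `s₂`
returning at `r₂` and then immediately to `d₁` starting at `r₂`, with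
`d₁.1 < d₂.1`, then `es(d₁) < es(d₂) ≤ s₂ < r₂ ≤ ls(d₁) < ls(d₂)` — in
particular a delivery to `d₁` may feasibly start at `s₂` and a delivery to `d₂`
may feasibly start at `r₂` or later. -/
theorem proper_consecutive_interleave (v R : ℝ) (D : Finset (ℝ × ℝ))
    (hv : 1 < v) (hR : 0 < R)
    (hband : ∀ d ∈ D, d.2 ≠ 0 ∧ |d.2| ≤ R / (2 * v) * Real.sqrt (v ^ 2 - 1))
    (hprop : Proper v R D)
    (d₁ d₂ : ℝ × ℝ) (hd₁ : d₁ ∈ D) (hd₂ : d₂ ∈ D) (hx : d₁.1 < d₂.1)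
    (s₂ r₂ r₁ : ℝ)
    (htrip₂ : Trip v R s₂ d₂ r₂) (htrip₁ : Trip v R r₂ d₁ r₁) :
    es v R d₁ < es v R d₂ ∧ es v R d₂ ≤ s₂ ∧ s₂ < r₂ ∧
      r₂ ≤ ls v R d₁ ∧ ls v R d₁ < ls v R d₂ := by
  have hv0 : (0:ℝ) < v := lt_trans one_pos hv
  have hne : d₁ ≠ d₂ := fun h => absurd hx (by rw [h]; exact lt_irrefl _)
  have h₁ := feasible_start v R hv hR d₁ (hband d₁ hd₁).2 r₂ r₁ htrip₁
  have h₂ := feasible_start v R hv hR d₂ (hband d₂ hd₂).2 s₂ r₂ htrip₂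
  have hsr : s₂ < r₂ := htrip₂.1
  have hW₁ : es v R d₁ ≤ ls v R d₁ := le_trans h₁.1 h₁.2
  have hW₂ : es v R d₂ ≤ ls v R d₂ := le_trans h₂.1 h₂.2
  have hni₁ := hprop.2 d₁ hd₁ d₂ hd₂ hne
  have hni₂ := hprop.2 d₂ hd₂ d₁ hd₁ hne.symm
  rw [Set.Icc_subset_Icc_iff hW₁] at hni₁
  rw [Set.Icc_subset_Icc_iff hW₂] at hni₂
  push_neg at hni₁ hni₂
  have hsum : es v R d₁ + ls v R d₁ < es v R d₂ + ls v R d₂ := by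
    simp only [es, ls]; linarith
  have hes : es v R d₁ < es v R d₂ := by
    by_contra hcon
    push_neg at hcon
    have := hni₁ hcon
    linarith
  have hls : ls v R d₁ < ls v R d₂ := by
    by_contra hcon
    push_neg at hcon
    have := hni₂ hes.le
    linarith
  exact ⟨hes, h₂.1, hsr, h₁.2, hls⟩

end
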